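/- arXiv:1306.5463 — 11 statements merged into one kernel-verified Lean document; each statement's English description precedes it below -/
import Mathlib

section
/- If a topological space X is an Alster space, then X satisfies the selection principle S₁(𝒜, 𝒪^δ): for every sequence (U_n) of Alster covers of X, one can choose A_n ∈ U_n for each n such that {A_n : n ∈ ω} covers X. -/
open Set TopologicalSpace

universe u

def IsOpenCover {X : Type u} [TopologicalSpace X] (𝒰 : Set (Set X)) : Prop :=
  (∀ U ∈ 𝒰, IsOpen U) ∧ ⋃₀ 𝒰 = univ

def IsAlsterCover {X : Type u} [TopologicalSpace X] (𝒰 : Set (Set X)) : Prop :=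
  (∀ U ∈ 𝒰, IsGδ U) ∧ ⋃₀ 𝒰 = univ ∧ ∀ K : Set X, IsCompact K → ∃ U ∈ 𝒰, K ⊆ U

def AlsterSpace (X : Type u) [TopologicalSpace X] : Prop :=
  ∀ 𝒰 : Set (Set X), IsAlsterCover 𝒰 → ∃ 𝒱 ⊆ 𝒰, 𝒱.Countable ∧ ⋃₀ 𝒱 = univ

def IsKCover {X : Type u} [TopologicalSpace X] (𝒰 : Set (Set X)) : Prop :=
  (∀ U ∈ 𝒰, IsOpen U) ∧ ⋃₀ 𝒰 = univ ∧ ∀ K : Set X, IsCompact K → ∃ U ∈ 𝒰, K ⊆ U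

def RothbergerSpace (X : Type u) [TopologicalSpace X] : Prop :=
  ∀ 𝒰 : ℕ → Set (Set X), (∀ n, IsOpenCover (𝒰 n)) →
    ∃ f : ℕ → Set X, (∀ n, f n ∈ 𝒰 n) ∧ ⋃ n, f n = univ

/-- The list of the first `n + 1` values of `f` (the history of moves up to inning `n`). -/
def hist {α : Type u} (f : ℕ → α) (n : ℕ) : List α := (List.range (n + 1)).map f

/-- Two has a winning strategy in the Menger game on `X`. -/
def MengerTwoWin (X : Type u) [TopologicalSpace X] : Prop :=
  ∃ σ : List (Set (Set X)) → Set (Set X),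
    ∀ 𝒰 : ℕ → Set (Set X), (∀ n, IsOpenCover (𝒰 n)) →
      (∀ n, (σ (hist 𝒰 n)).Finite ∧ σ (hist 𝒰 n) ⊆ 𝒰 n) ∧
      (⋃ n, ⋃₀ σ (hist 𝒰 n)) = univ

/-- Two has a winning strategy in the Rothberger game on `X`. -/
def RothTwoWin (X : Type u) [TopologicalSpace X] : Prop :=
  ∃ σ : List (Set (Set X)) → Set X,
    ∀ 𝒰 : ℕ → Set (Set X), (∀ n, IsOpenCover (𝒰 n)) →
      (∀ n, σ (hist 𝒰 n) ∈ 𝒰 n) ∧ (⋃ n, σ (hist 𝒰 n)) = univ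

/-- One has a winning strategy in the Rothberger game on `X`. -/
def RothOneWin (X : Type u) [TopologicalSpace X] : Prop :=
  ∃ σ : List (Set X) → Set (Set X), (∀ l, IsOpenCover (σ l)) ∧
    ∀ g : ℕ → Set X, (∀ n, g n ∈ σ ((List.range n).map g)) → (⋃ n, g n) ≠ univ

/-- One has a winning strategy in the point-open game on `X`. -/
def POOneWin (X : Type u) [TopologicalSpace X] : Prop :=
  ∃ σ : List (Set X) → X,
    ∀ g : ℕ → Set X, (∀ n, IsOpen (g n) ∧ σ ((List.range n).map g) ∈ g n) →
      (⋃ n, g n) = univ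

/-- Two has a winning strategy in the point-open game on `X`. -/
def POTwoWin (X : Type u) [TopologicalSpace X] : Prop :=
  ∃ σ : List X → Set X,
    ∀ x : ℕ → X, (∀ n, IsOpen (σ (hist x n)) ∧ x n ∈ σ (hist x n)) ∧
      (⋃ n, σ (hist x n)) ≠ univ

/-- The Gδ-modification of the topology of `X`. -/
def gdeltaTop (X : Type u) [TopologicalSpace X] : TopologicalSpace X :=
  generateFrom {s : Set X | IsGδ s}

def Scattered (X : Type u) [TopologicalSpace X] : Prop :=
  ∀ S : Set X, S.Nonempty → ∃ x ∈ S, ∃ U : Set X, IsOpen U ∧ U ∩ S = {x}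

/-!
The intersections `⋂ n, A n` of selectors `A n ∈ 𝒰 n` are again Gδ, and any compact set lies in
one of them, so they form an Alster cover. A countable subcover is given by selectors `a k`, and
the diagonal selector `n ↦ a k n` with `k` the first coordinate of `n` under `Nat.unpair` takes,
for every `k`, some value `a k n ⊇ ⋂ m, a k m`.
-/

section Selectors

variable {α β : Type*}

lemma exists_seq_iUnion_eq_univ_of_countable_subcover {g : β → Set α} {s : Set β}
    (hs : s.Nonempty) {𝒱 : Set (Set α)} (h𝒱 : 𝒱 ⊆ g '' s) (hc : 𝒱.Countable)
    (hcov : ⋃₀ 𝒱 = univ) : ∃ b : ℕ → β, (∀ k, b k ∈ s) ∧ ⋃ k, g (b k) = univ := by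
  obtain ⟨b₀, hb₀⟩ := hs
  -- adding `g b₀` makes the subcover nonempty, so it can be enumerated
  obtain ⟨v, hv⟩ := (hc.insert (g b₀)).exists_eq_range (insert_nonempty _ _)
  have hvs : ∀ k, v k ∈ g '' s := fun k =>
    insert_subset (mem_image_of_mem g hb₀) h𝒱 (hv ▸ mem_range_self k)
  choose b hb hbv using hvs
  refine ⟨b, hb, eq_univ_of_univ_subset ?_⟩
  calc univ = ⋃₀ 𝒱 := hcov.symm
    _ ⊆ ⋃₀ insert (g b₀) 𝒱 := sUnion_mono (subset_insert _ _)
    _ = ⋃ k, g (b k) := by rw [hv, sUnion_range]; exact iUnion_congr fun k => (hbv k).symm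

lemma exists_mem_pi_iUnion_eq_univ {𝒰 : ℕ → Set (Set α)} (a : ℕ → ℕ → Set α)
    (ha : ∀ k, a k ∈ univ.pi 𝒰) (hcov : ⋃ k, ⋂ n, a k n = univ) :
    ∃ f ∈ univ.pi 𝒰, ⋃ n, f n = univ := by
  refine ⟨fun n => a n.unpair.1 n, fun n _ => ha _ n trivial, eq_univ_of_univ_subset ?_⟩
  rw [← hcov]
  refine iUnion_subset fun k => (iInter_subset _ (Nat.pair k 0)).trans ?_
  refine subset_iUnion_of_subset (Nat.pair k 0) ?_
  rw [Nat.unpair_pair]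

end Selectors

section AlsterCover

variable {X : Type u} [TopologicalSpace X]

lemma isAlsterCover_of_isCompact_subset {𝒰 : Set (Set X)} (hGδ : ∀ U ∈ 𝒰, IsGδ U)
    (hK : ∀ K : Set X, IsCompact K → ∃ U ∈ 𝒰, K ⊆ U) : IsAlsterCover 𝒰 := by
  refine ⟨hGδ, eq_univ_of_forall fun x => ?_, hK⟩
  obtain ⟨U, hU, hxU⟩ := hK {x} isCompact_singleton
  exact ⟨U, hU, singleton_subset_iff.1 hxU⟩

lemma IsAlsterCover.nonempty {𝒰 : Set (Set X)} (h : IsAlsterCover 𝒰) : 𝒰.Nonempty :=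
  let ⟨U, hU, _⟩ := h.2.2 ∅ isCompact_empty
  ⟨U, hU⟩

lemma isAlsterCover_image_iInter_pi {𝒰 : ℕ → Set (Set X)} (h𝒰 : ∀ n, IsAlsterCover (𝒰 n)) :
    IsAlsterCover ((fun A : ℕ → Set X => ⋂ n, A n) '' univ.pi 𝒰) := by
  refine isAlsterCover_of_isCompact_subset ?_ fun K hK => ?_
  · rintro _ ⟨A, hA, rfl⟩
    exact .iInter fun n => (h𝒰 n).1 _ (hA n trivial)
  · choose A hA hKA using fun n => (h𝒰 n).2.2 K hK
    exact ⟨_, mem_image_of_mem _ fun n _ => hA n, subset_iInter hKA⟩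

end AlsterCover

/-- Alster implies S₁(𝒜, 𝒪^δ). -/
theorem alster_S1_alster_gdelta (X : Type u) [TopologicalSpace X] (h : AlsterSpace X) :
    ∀ 𝒰 : ℕ → Set (Set X), (∀ n, IsAlsterCover (𝒰 n)) →
      ∃ f : ℕ → Set X, (∀ n, f n ∈ 𝒰 n) ∧ (⋃ n, f n) = univ := by
  intro 𝒰 h𝒰
  have hpi : (univ.pi 𝒰).Nonempty := univ_pi_nonempty_iff.2 fun n => (h𝒰 n).nonempty
  obtain ⟨𝒱, h𝒱, hc, hcov⟩ := h _ (isAlsterCover_image_iInter_pi h𝒰)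
  obtain ⟨a, ha, hacov⟩ := exists_seq_iUnion_eq_univ_of_countable_subcover hpi h𝒱 hc hcov
  obtain ⟨f, hf, hfcov⟩ := exists_mem_pi_iUnion_eq_univ a ha hacov
  exact ⟨f, fun n => hf n trivial, hfcov⟩
end

section
/- Every Alster space satisfies S₁(𝒦, 𝒪): for every sequence (U_n) of k-covers of X, one can choose U_n ∈ U_n such that {U_n : n ∈ ω} is an open cover of X. -/
/-!
Given k-covers `𝒰 n`, every sequence `u` with `u n ∈ 𝒰 n` yields the Gδ set `⋂ n, u n`, and since
each compact set lies in some member of every `𝒰 n`, these intersections form an Alster cover.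
Alster gives countably many sequences `u j` with `⋃ j, ⋂ n, u j n = X`; the diagonal selection
`n ↦ u n n` then covers `X`, because `⋂ n, u j n ⊆ u j j`.
-/

open Set TopologicalSpace

universe u

theorem Set.Countable.exists_seq_subset_image {α β : Type*} {g : α → β} {s : Set α} {t : Set β}
    (hc : t.Countable) (ht : t ⊆ g '' s) (hs : s.Nonempty) :
    ∃ a : ℕ → α, (∀ j, a j ∈ s) ∧ t ⊆ range (g ∘ a) := by
  choose φ hφs hφg using fun y : t => ht y.2
  have : Countable t := hc.to_subtype
  obtain ⟨a, ha⟩ := ((countable_range φ).insert hs.some).exists_eq_range (insert_nonempty _ _)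
  refine ⟨a, fun j => ?_, fun y hy => ?_⟩
  · have : a j ∈ insert hs.some (range φ) := ha ▸ mem_range_self j
    rcases this with h | ⟨y, hy⟩
    · exact h ▸ hs.some_mem
    · exact hy ▸ hφs y
  · obtain ⟨j, hj⟩ : φ ⟨y, hy⟩ ∈ range a := ha ▸ mem_insert_of_mem _ (mem_range_self _)
    exact ⟨j, by simp only [Function.comp_apply, hj, hφg]⟩

theorem IsKCover.nonempty {X : Type u} [TopologicalSpace X] {𝒰 : Set (Set X)} (h : IsKCover 𝒰) :
    𝒰.Nonempty :=
  let ⟨U, hU, _⟩ := h.2.2 ∅ isCompact_empty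
  ⟨U, hU⟩

theorem isAlsterCover_iInter_of_isKCover {X : Type u} [TopologicalSpace X]
    {𝒰 : ℕ → Set (Set X)} (h𝒰 : ∀ n, IsKCover (𝒰 n)) :
    IsAlsterCover ((fun u : ℕ → Set X => ⋂ n, u n) '' univ.pi 𝒰) := by
  have hcompact : ∀ K : Set X, IsCompact K → ∃ G ∈ (fun u : ℕ → Set X => ⋂ n, u n) '' univ.pi 𝒰,
      K ⊆ G := by
    intro K hK
    choose u hu hKu using fun n => (h𝒰 n).2.2 K hK
    exact ⟨⋂ n, u n, ⟨u, fun n _ => hu n, rfl⟩, subset_iInter hKu⟩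
  refine ⟨?_, ?_, hcompact⟩
  · rintro _ ⟨u, hu, rfl⟩
    exact .iInter fun n => ((h𝒰 n).1 _ (hu n (mem_univ n))).isGδ
  · refine eq_univ_of_forall fun x => ?_
    obtain ⟨G, hG, hxG⟩ := hcompact {x} isCompact_singleton
    exact ⟨G, hG, hxG rfl⟩

/-- Every Alster space satisfies S₁(𝒦, 𝒪). -/
theorem alster_S1_kcover (X : Type u) [TopologicalSpace X] (h : AlsterSpace X) :
    ∀ 𝒰 : ℕ → Set (Set X), (∀ n, IsKCover (𝒰 n)) →
      ∃ f : ℕ → Set X, (∀ n, f n ∈ 𝒰 n) ∧ (⋃ n, f n) = univ := by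
  intro 𝒰 h𝒰
  obtain ⟨𝒱, h𝒱, h𝒱c, h𝒱X⟩ := h _ (isAlsterCover_iInter_of_isKCover h𝒰)
  obtain ⟨u, hu, h𝒱u⟩ := h𝒱c.exists_seq_subset_image h𝒱
    (univ_pi_nonempty_iff.2 fun n => (h𝒰 n).nonempty)
  refine ⟨fun n => u n n, fun n => hu n n (mem_univ n), eq_univ_of_univ_subset ?_⟩
  calc univ = ⋃₀ 𝒱 := h𝒱X.symm
    _ ⊆ ⋃ j, ⋂ n, u j n := by
      rw [← sUnion_range]
      exact sUnion_mono h𝒱u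
    _ ⊆ ⋃ n, u n n := iUnion_mono fun j => iInter_subset _ j
end

section
/- If Two has a winning strategy in the Menger game on a regular topological space X, then X is an Alster space. -/
/-! Fix a winning strategy `σ` for Two. After a finite sequence `p` of moves of One, the set
`K_p = ⋂_𝒰 closure (⋃ σ(p⌢𝒰))` is compact: in a regular space, a closed set lying in the closure
of a finite subfamily of every open cover is compact. So some member `A_p` of the Alster cover
contains `K_p`. Playing `σ` against a constant cover shows that `X` is Lindelöf, hence so is the
complement of the `Gδ` set `A_p`; therefore countably many moves `𝒰` of One suffice for every point
outside `A_p` to be missed by `σ(p⌢𝒰)` for one of them. The sets `A_p`, over the countably branching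
tree of positions built from these moves, cover `X`: a point outside all of them picks out a branch,
that is a play of One, in which `σ` never covers it. -/

open Set TopologicalSpace

universe u

open Filter Topology

section Lists

variable {α β : Type u}

theorem hist_succ (f : ℕ → α) (n : ℕ) :
    hist f (n + 1) = hist f n ++ [f (n + 1)] := by
  simp [hist, List.range_succ]

theorem map_hist (f : α → β) (g : ℕ → α) (n : ℕ) :
    (hist g n).map f = hist (f ∘ g) n :=
  List.map_map

theorem hist_getD_append (p : List α) (a d : α) :
    hist (fun n => (p ++ [a]).getD n d) p.length = p ++ [a] := by
  refine List.ext_getElem (by simp [hist]) fun n h₁ h₂ => ?_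
  simp [hist, List.getElem?_eq_getElem h₂]

end Lists

section Topology

variable {X : Type u} [TopologicalSpace X]

theorem IsOpenCover.singleton_univ : _root_.IsOpenCover ({univ} : Set (Set X)) :=
  ⟨fun _ hU => hU ▸ isOpen_univ, sUnion_singleton _⟩

theorem IsGδ.isLindelof_compl [LindelofSpace X] {A : Set X} (hA : IsGδ A) : IsLindelof Aᶜ := by
  obtain ⟨B, hB, rfl⟩ := hA.eq_iInter_nat
  rw [compl_iInter]
  exact isLindelof_iUnion fun n => (hB n).isClosed_compl.isLindelof

theorem lindelofSpace_of_countable_sUnion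
    (h : ∀ 𝒞 : Set (Set X), _root_.IsOpenCover 𝒞 → ∃ 𝒯 ⊆ 𝒞, 𝒯.Countable ∧ ⋃₀ 𝒯 = univ) :
    LindelofSpace X := by
  refine ⟨isLindelof_of_countable_subcover fun U hU hUX => ?_⟩
  obtain ⟨𝒯, h𝒯U, h𝒯, h𝒯X⟩ :=
    h (range U) ⟨forall_mem_range.2 hU, by rw [sUnion_range, ← univ_subset_iff]; exact hUX⟩
  have := h𝒯.to_subtype
  refine ⟨range fun V : 𝒯 => rangeSplitting U ⟨V, h𝒯U V.2⟩, countable_range _, ?_⟩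
  rintro x -
  obtain ⟨V, hV, hxV⟩ := h𝒯X.symm ▸ mem_univ x
  exact mem_biUnion (mem_range_self ⟨V, hV⟩) ((apply_rangeSplitting U ⟨V, _⟩).symm ▸ hxV)

theorem Ultrafilter.exists_isOpen_closure_notMem [RegularSpace X] (F : Ultrafilter X) {z : X}
    (hz : ¬ ↑F ≤ 𝓝 z) :
    ∃ N, IsOpen N ∧ z ∈ N ∧ closure N ∉ F := by
  obtain ⟨C, ⟨hCz, hC⟩, hCF⟩ := not_forall₂.1 fun h => hz ((closed_nhds_basis z).ge_iff.2 h)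
  exact ⟨interior C, isOpen_interior, mem_interior_iff_mem_nhds.2 hCz,
    fun h => hCF (F.mem_of_superset h (closure_minimal interior_subset hC))⟩

theorem isCompact_of_isClosed_of_subset_closure [RegularSpace X] {K : Set X} (hK : IsClosed K)
    (h : ∀ 𝒲, _root_.IsOpenCover 𝒲 → ∃ 𝒢 ⊆ 𝒲, 𝒢.Finite ∧ K ⊆ closure (⋃₀ 𝒢)) :
    IsCompact K := by
  refine isCompact_iff_ultrafilter_le_nhds'.2 fun F hKF => by_contra fun hF => ?_
  have hN : ∀ z, ∃ N, IsOpen N ∧ z ∈ N ∧ closure N ∉ F := fun z =>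
    F.exists_isOpen_closure_notMem fun hz => hF ⟨z, hK.mem_of_tendsto hz hKF, hz⟩
  choose N hNo hzN hNF using hN
  obtain ⟨𝒢, h𝒢N, h𝒢, hK𝒢⟩ := h {N | IsOpen N ∧ closure N ∉ F} ⟨fun _ h => h.1,
    eq_univ_of_forall fun z => ⟨N z, ⟨hNo z, hNF z⟩, hzN z⟩⟩
  rw [h𝒢.closure_sUnion] at hK𝒢
  obtain ⟨G, hG, hGF⟩ := (Ultrafilter.finite_biUnion_mem_iff h𝒢).1 (F.mem_of_superset hKF hK𝒢)
  exact (h𝒢N hG).2 hGF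

end Topology

section Tree

variable {α : Type u}

/-- The indices in `s` are used from its last entry to its first. -/
def treePos (next : List α → ℕ → α) : List ℕ → List α
  | [] => []
  | m :: s => treePos next s ++ [next (treePos next s) m]

def treeBranch (choice : List ℕ → ℕ) : ℕ → List ℕ
  | 0 => []
  | j + 1 => choice (treeBranch choice j) :: treeBranch choice j

theorem hist_treePos_treeBranch (next : List α → ℕ → α) (choice : List ℕ → ℕ) (j : ℕ) :
    hist (fun i => next (treePos next (treeBranch choice i)) (choice (treeBranch choice i))) j =
      treePos next (treeBranch choice (j + 1)) := by
  induction j with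
  | zero => rfl
  | succ j ih => rw [hist_succ, ih]; rfl

end Tree

namespace MengerGame

variable {X : Type u} [TopologicalSpace X]

/-- One's moves; positions are lists of them, so every position is a legal one. -/
abbrev OpenCover (X : Type u) [TopologicalSpace X] := {𝒰 : Set (Set X) // _root_.IsOpenCover 𝒰}

instance : Inhabited (OpenCover X) := ⟨⟨{univ}, IsOpenCover.singleton_univ⟩⟩

def IsWinningStrategy (σ : List (Set (Set X)) → Set (Set X)) : Prop :=
  ∀ 𝒰 : ℕ → Set (Set X), (∀ n, _root_.IsOpenCover (𝒰 n)) →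
    (∀ n, (σ (hist 𝒰 n)).Finite ∧ σ (hist 𝒰 n) ⊆ 𝒰 n) ∧ (⋃ n, ⋃₀ σ (hist 𝒰 n)) = univ

def reply (σ : List (Set (Set X)) → Set (Set X)) (p : List (OpenCover X)) (𝒰 : OpenCover X) :
    Set (Set X) :=
  σ ((p ++ [𝒰]).map Subtype.val)

variable {σ : List (Set (Set X)) → Set (Set X)}

namespace IsWinningStrategy

theorem iUnion_eq_univ (hσ : IsWinningStrategy σ) (𝒰 : ℕ → OpenCover X) :
    ⋃ n, ⋃₀ σ ((hist 𝒰 n).map Subtype.val) = univ := by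
  simpa only [map_hist] using (hσ (Subtype.val ∘ 𝒰) fun n => (𝒰 n).2).2

theorem reply_finite_subset (hσ : IsWinningStrategy σ) (p : List (OpenCover X))
    (𝒰 : OpenCover X) : (reply σ p 𝒰).Finite ∧ reply σ p 𝒰 ⊆ 𝒰.1 := by
  have := (hσ (Subtype.val ∘ fun n => (p ++ [𝒰]).getD n default) fun _ => Subtype.prop _).1
    p.length
  rwa [← map_hist, hist_getD_append, Function.comp_apply, List.getD_append_right _ _ _ _ le_rfl,
    Nat.sub_self, List.getD_cons_zero] at this

theorem lindelofSpace (hσ : IsWinningStrategy σ) : LindelofSpace X :=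
  lindelofSpace_of_countable_sUnion fun 𝒞 h𝒞 => by
    obtain ⟨hfin, hX⟩ := hσ (fun _ => 𝒞) fun _ => h𝒞
    refine ⟨⋃ n, σ (hist (fun _ => 𝒞) n), iUnion_subset fun n => (hfin n).2,
      countable_iUnion fun n => (hfin n).1.countable, ?_⟩
    rwa [sUnion_iUnion]

end IsWinningStrategy

def compactCore (σ : List (Set (Set X)) → Set (Set X)) (p : List (OpenCover X)) : Set X :=
  ⋂ 𝒰, closure (⋃₀ reply σ p 𝒰)

theorem IsWinningStrategy.isCompact_compactCore [RegularSpace X] (hσ : IsWinningStrategy σ)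
    (p : List (OpenCover X)) : IsCompact (compactCore σ p) :=
  isCompact_of_isClosed_of_subset_closure (isClosed_iInter fun _ => isClosed_closure)
    fun 𝒲 h𝒲 => ⟨reply σ p ⟨𝒲, h𝒲⟩, (hσ.reply_finite_subset p ⟨𝒲, h𝒲⟩).2,
      (hσ.reply_finite_subset p ⟨𝒲, h𝒲⟩).1, iInter_subset _ _⟩

theorem IsWinningStrategy.exists_seq_notMem_reply (hσ : IsWinningStrategy σ)
    {p : List (OpenCover X)} {A : Set X} (hA : IsGδ A) (hpA : compactCore σ p ⊆ A) :
    ∃ next : ℕ → OpenCover X, ∀ x ∉ A, ∃ k, x ∉ ⋃₀ reply σ p (next k) := by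
  have := hσ.lindelofSpace
  obtain ⟨next, hnext⟩ := hA.isLindelof_compl.indexed_countable_subcover
    (fun 𝒰 => (closure (⋃₀ reply σ p 𝒰))ᶜ) (fun _ => isClosed_closure.isOpen_compl)
    fun x hx => by simpa [compactCore] using fun h => hx (hpA h)
  refine ⟨next, fun x hx => ?_⟩
  obtain ⟨k, hk⟩ := mem_iUnion.1 (hnext hx)
  exact ⟨k, fun h => hk (subset_closure h)⟩

theorem IsWinningStrategy.iUnion_treePos_eq_univ (hσ : IsWinningStrategy σ)
    (next : List (OpenCover X) → ℕ → OpenCover X) {A : List (OpenCover X) → Set X}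
    (hA : ∀ p, ∀ x ∉ A p, ∃ m, x ∉ ⋃₀ reply σ p (next p m)) :
    ⋃ s, A (treePos next s) = univ := by
  refine eq_univ_of_forall fun x => by_contra fun hx => ?_
  simp only [mem_iUnion, not_exists] at hx
  choose choice hchoice using fun s => hA _ x (hx s)
  obtain ⟨j, hj⟩ := mem_iUnion.1 <| (hσ.iUnion_eq_univ fun i =>
    next (treePos next (treeBranch choice i)) (choice (treeBranch choice i))).symm ▸ mem_univ x
  rw [hist_treePos_treeBranch] at hj
  exact hchoice _ hj

end MengerGame

open MengerGame

/-- Two winning the Menger game on a regular space implies Alster. -/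
theorem mengerTwoWin_alster (X : Type u) [TopologicalSpace X] [RegularSpace X]
    (h : MengerTwoWin X) : AlsterSpace X := by
  obtain ⟨σ, hσ⟩ := h
  replace hσ : IsWinningStrategy σ := hσ
  rintro 𝒜 ⟨h𝒜, -, hK𝒜⟩
  choose A hA𝒜 hKA using fun p => hK𝒜 _ (hσ.isCompact_compactCore p)
  choose next hnext using fun p => hσ.exists_seq_notMem_reply (h𝒜 _ (hA𝒜 p)) (hKA p)
  refine ⟨range fun s => A (treePos next s), range_subset_iff.2 fun s => hA𝒜 _,
    countable_range _, ?_⟩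
  rw [sUnion_range]
  exact hσ.iUnion_treePos_eq_univ next hnext
end

section
/- If Two has a winning strategy in the Rothberger game on a topological space X, then the Gδ-modification X_δ of X is a Lindelöf space. -/
open Set TopologicalSpace

universe u

/-!
A winning strategy σ for Two singles out, at every legal position `p`, a point `x` each of whose
open neighbourhoods contains one of Two's answers at `p`: otherwise the cover of `X` by
neighbourhoods avoiding those answers would defeat σ. Given a cover by Gδ sets, pick a member
`G = ⋂ₙ Vₙ` containing `x` and covers `𝒰ₙ` whose answers lie in `Vₙ`, so that every point lying in
all these answers lies in `G`. Iterating from the empty position builds a tree of positions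
indexed by finite sequences of naturals and a countable subfamily of the cover. A point outside
this subfamily would at every node escape one of Two's answers; following those edges yields a
play that Two loses. Since finite intersections of Gδ sets are Gδ, the Gδ sets form a basis of
the Gδ-modification, and covers by basic sets suffice for the Lindelöf property.
-/

section GdeltaModification

variable {X : Type*}

theorem TopologicalSpace.IsTopologicalBasis.lindelofSpace_of_countable_subcover
    [TopologicalSpace X] {B : Set (Set X)} (hB : IsTopologicalBasis B)
    (h : ∀ 𝒢 ⊆ B, ⋃₀ 𝒢 = univ → ∃ 𝒱 ⊆ 𝒢, 𝒱.Countable ∧ ⋃₀ 𝒱 = univ) :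
    LindelofSpace X := by
  refine ⟨isLindelof_of_countable_subcover ?_⟩
  intro ι U hU hcov
  obtain ⟨𝒱, h𝒱, h𝒱c, h𝒱cov⟩ := h {b ∈ B | ∃ i, b ⊆ U i} (fun b hb => hb.1) <| by
    refine sUnion_eq_univ_iff.2 fun x => ?_
    obtain ⟨i, hxi⟩ := mem_iUnion.1 (hcov (mem_univ x))
    obtain ⟨b, hbB, hxb, hbU⟩ := hB.exists_subset_of_mem_open hxi (hU i)
    exact ⟨b, ⟨hbB, i, hbU⟩, hxb⟩
  choose index hindex using fun b : 𝒱 => (h𝒱 b.2).2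
  have := h𝒱c.to_subtype
  refine ⟨range index, countable_range _, fun x _ => ?_⟩
  obtain ⟨b, hb, hxb⟩ := sUnion_eq_univ_iff.1 h𝒱cov x
  exact mem_biUnion (mem_range_self ⟨b, hb⟩) (hindex ⟨b, hb⟩ hxb)

theorem isTopologicalBasis_isGδ_gdeltaTop [TopologicalSpace X] :
    @IsTopologicalBasis X (gdeltaTop X) {s | IsGδ s} := by
  have := @isTopologicalBasis_of_subbasis_of_inter X (gdeltaTop X) {s | IsGδ s} rfl
    fun _ hs _ ht => hs.inter ht
  rwa [insert_eq_of_mem (s := {s : Set X | IsGδ s}) IsGδ.univ] at this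

end GdeltaModification

section TreePosition

variable {α : Type u}

theorem hist_eq_append (f : ℕ → α) (n : ℕ) : hist f n = (List.range n).map f ++ [f n] := by
  simp [hist, List.range_succ]

theorem hist_getD (l : List α) (a : α) : hist (l.getD · a) l.length = l ++ [a] := by
  rw [hist_eq_append, List.getD_eq_default _ _ le_rfl]
  congr 1
  refine List.ext_getElem (by simp) fun n _ hn => ?_
  simp [hn]

/-- The position reached at node `s` of the tree in which the move at position `p` along
the edge labelled `n` is `next p n`; the most recent edge is the head of `s`. -/
def treePosition (next : List α → ℕ → α) (s : List ℕ) : List α :=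
  s.foldr (fun n p => p ++ [next p n]) []

theorem treePosition_cons (next : List α → ℕ → α) (n : ℕ) (s : List ℕ) :
    treePosition next (n :: s) = treePosition next s ++ [next (treePosition next s) n] :=
  rfl

end TreePosition

section Rothberger

variable {X : Type u} [TopologicalSpace X]

theorem forall_isOpenCover_treePosition {next : List (Set (Set X)) → ℕ → Set (Set X)}
    (hnext : ∀ p : List (Set (Set X)), (∀ 𝒞 ∈ p, IsOpenCover 𝒞) → ∀ n, IsOpenCover (next p n))
    (s : List ℕ) :
    ∀ 𝒞 ∈ treePosition next s, IsOpenCover 𝒞 := by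
  induction s with
  | nil => simp [treePosition]
  | cons n s ih =>
    simp only [treePosition_cons, List.mem_append, List.mem_singleton]
    rintro 𝒞 (h𝒞 | rfl)
    exacts [ih 𝒞 h𝒞, hnext _ ih n]

def IsRothTwoWinning (σ : List (Set (Set X)) → Set X) : Prop :=
  ∀ 𝒰 : ℕ → Set (Set X), (∀ n, IsOpenCover (𝒰 n)) →
    (∀ n, σ (hist 𝒰 n) ∈ 𝒰 n) ∧ (⋃ n, σ (hist 𝒰 n)) = univ

namespace IsRothTwoWinning

variable {σ : List (Set (Set X)) → Set X} (hσ : IsRothTwoWinning σ)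
include hσ

theorem response_mem {p : List (Set (Set X))} (hp : ∀ 𝒞 ∈ p, IsOpenCover 𝒞)
    {𝒰 : Set (Set X)} (h𝒰 : IsOpenCover 𝒰) : σ (p ++ [𝒰]) ∈ 𝒰 := by
  have hplay : ∀ n, IsOpenCover (p.getD n 𝒰) := fun n => by
    rcases lt_or_ge n p.length with hn | hn
    · rw [List.getD_eq_getElem _ _ hn]; exact hp _ (List.getElem_mem hn)
    · rwa [List.getD_eq_default _ _ hn]
  simpa only [hist_getD, List.getD_eq_default _ _ le_rfl] using (hσ _ hplay).1 p.length

theorem exists_forall_isOpen_response_subset {p : List (Set (Set X))}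
    (hp : ∀ 𝒞 ∈ p, IsOpenCover 𝒞) :
    ∃ x, ∀ V : Set X, IsOpen V → x ∈ V →
      ∃ 𝒰 : Set (Set X), IsOpenCover 𝒰 ∧ σ (p ++ [𝒰]) ⊆ V := by
  by_contra! h
  choose V hVo hxV hV using h
  have hcov : IsOpenCover (range V) :=
    ⟨forall_mem_range.2 hVo, sUnion_eq_univ_iff.2 fun x => ⟨V x, mem_range_self x, hxV x⟩⟩
  obtain ⟨x, hx⟩ := hσ.response_mem hp hcov
  exact hV x _ hcov hx.ge

theorem exists_iInter_response_subset {𝒢 : Set (Set X)} (h𝒢 : ∀ G ∈ 𝒢, IsGδ G)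
    (hcov : ⋃₀ 𝒢 = univ) {p : List (Set (Set X))} (hp : ∀ 𝒞 ∈ p, IsOpenCover 𝒞) :
    ∃ G ∈ 𝒢, ∃ 𝒰 : ℕ → Set (Set X), (∀ n, IsOpenCover (𝒰 n)) ∧
      ⋂ n, σ (p ++ [𝒰 n]) ⊆ G := by
  obtain ⟨x, hx⟩ := hσ.exists_forall_isOpen_response_subset hp
  obtain ⟨G, hG, hxG⟩ := sUnion_eq_univ_iff.1 hcov x
  obtain ⟨V, hVo, rfl⟩ := isGδ_iff_eq_iInter_nat.1 (h𝒢 G hG)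
  choose 𝒰 h𝒰 hσV using fun n => hx (V n) (hVo n) (mem_iInter.1 hxG n)
  exact ⟨_, hG, 𝒰, h𝒰, iInter_mono hσV⟩

theorem exists_node_forall_mem_response {next : List (Set (Set X)) → ℕ → Set (Set X)}
    (hnext : ∀ p : List (Set (Set X)), (∀ 𝒞 ∈ p, IsOpenCover 𝒞) → ∀ n, IsOpenCover (next p n))
    (x : X) :
    ∃ s, ∀ n, x ∈ σ (treePosition next s ++ [next (treePosition next s) n]) := by
  by_contra! h
  choose edge hedge using h
  set branch : ℕ → List ℕ := fun k => (fun s => edge s :: s)^[k] []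
  set play : ℕ → Set (Set X) := fun k => next (treePosition next (branch k)) (edge (branch k))
  have hbranch : ∀ k, treePosition next (branch k) = (List.range k).map play := by
    intro k
    induction k with
    | zero => rfl
    | succ k ih =>
      simp only [branch, Function.iterate_succ_apply', treePosition_cons, List.range_succ,
        List.map_append, List.map_singleton]
      rw [← ih]
  have hplay : ∀ k, IsOpenCover (play k) := fun k =>
    hnext _ (forall_isOpenCover_treePosition hnext _) _
  obtain ⟨k, hk⟩ := mem_iUnion.1 ((hσ play hplay).2.symm ▸ mem_univ x)
  rw [hist_eq_append, ← hbranch] at hk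
  exact hedge _ hk

theorem exists_countable_subcover_of_isGδ {𝒢 : Set (Set X)} (h𝒢 : ∀ G ∈ 𝒢, IsGδ G)
    (hcov : ⋃₀ 𝒢 = univ) : ∃ 𝒱 ⊆ 𝒢, 𝒱.Countable ∧ ⋃₀ 𝒱 = univ := by
  choose! G hG next hnext hsub using fun (p : List (Set (Set X))) (hp : ∀ 𝒞 ∈ p, IsOpenCover 𝒞) =>
    hσ.exists_iInter_response_subset h𝒢 hcov hp
  have hpos := forall_isOpenCover_treePosition hnext
  refine ⟨range (G ∘ treePosition next), range_subset_iff.2 fun s => hG _ (hpos s),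
    countable_range _, sUnion_eq_univ_iff.2 fun x => ?_⟩
  obtain ⟨s, hs⟩ := hσ.exists_node_forall_mem_response hnext x
  exact ⟨_, mem_range_self s, hsub _ (hpos s) (mem_iInter.2 hs)⟩

end IsRothTwoWinning

end Rothberger

/-- Two winning the Rothberger game implies the Gδ-modification is Lindelöf. -/
theorem rothTwoWin_gdelta_lindelof (X : Type u) [TopologicalSpace X] (h : RothTwoWin X) :
    @LindelofSpace X (gdeltaTop X) := by
  obtain ⟨σ, hσ⟩ := h
  exact @IsTopologicalBasis.lindelofSpace_of_countable_subcover X (gdeltaTop X) _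
    isTopologicalBasis_isGδ_gdeltaTop fun _ h𝒢 hcov =>
      IsRothTwoWinning.exists_countable_subcover_of_isGδ hσ h𝒢 hcov
end

section
/- The Rothberger game and the point-open game are dual: One has a winning strategy in the Rothberger game on X if and only if Two has a winning strategy in the point-open game on X, and Two has a winning strategy in the Rothberger game on X if and only if One has a winning strategy in the point-open game on X. -/
open Set TopologicalSpace

universe u

/-!
Each winning strategy is transferred to the opponent in the other game by simulating, next to
the actual play, a play of the first game whose moves are chosen one by one from the history of
the actual one (`replay`). For Rothberger/One → point-open/Two, Two answers `x` by a member of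
One's current cover containing `x`; for point-open/One → Rothberger/Two, Two picks a member of the
current cover containing One's current point; for point-open/Two → Rothberger/One, One offers the
cover of all possible answers of Two.

The converse of the last transfer is the one that needs an idea. If `σ` is a strategy of Two in the
Rothberger game and `h` a finite history of covers, some point `x` has the property that every
open neighbourhood of `x` contains `σ (h ++ [𝒰])` for some open cover `𝒰`: otherwise the open
sets failing this property form an open cover `𝒲`, and `σ (h ++ [𝒲]) ∈ 𝒲` contradicts the
definition of `𝒲`. One plays such points and Two's open sets dictate the simulated covers.
-/

section Replay

variable {α β : Type*}

/-- `replay step [a₀, …, aₙ₋₁] = [b₀, …, bₙ₋₁]` where `bₖ = step [b₀, …, bₖ₋₁] aₖ`. -/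
def replay (step : List β → α → β) (l : List α) : List β :=
  l.foldl (fun acc a => acc ++ [step acc a]) []

theorem replay_append_singleton (step : List β → α → β) (l : List α) (a : α) :
    replay step (l ++ [a]) = replay step l ++ [step (replay step l) a] := by
  simp [replay, List.foldl_append]

theorem replay_map_range (step : List β → α → β) (x : ℕ → α) (n : ℕ) :
    replay step ((List.range n).map x) =
      (List.range n).map fun k => step (replay step ((List.range k).map x)) (x k) := by
  induction n with
  | zero => rfl
  | succ n ih =>
    simp only [List.range_succ, List.map_append, List.map_cons, List.map_nil,
      replay_append_singleton, ih]

end Replay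

section Hist

variable {α : Type u}

theorem getLastD_replay_hist {β : Type*} (step : List β → α → β) (x : ℕ → α) (n : ℕ) (d : β) :
    (replay step (hist x n)).getLastD d = step (replay step ((List.range n).map x)) (x n) := by
  simp [hist_eq_append, replay_append_singleton]

theorem append_singleton_of_forall_hist {Q : α → Prop} {P : List α → α → Prop}
    (hP : ∀ f : ℕ → α, (∀ n, Q (f n)) → ∀ n, P (hist f n) (f n))
    {l : List α} (hl : ∀ b ∈ l, Q b) {a : α} (ha : Q a) : P (l ++ [a]) a := by
  have hQ (b : α) (hb : b ∈ l ++ [a]) : Q b :=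
    (List.mem_append.1 hb).elim (hl b) fun hb => List.mem_singleton.1 hb ▸ ha
  let f (i : ℕ) : α := (l ++ [a])[i]?.getD a
  have hf (i : ℕ) : Q (f i) := by
    cases hi : (l ++ [a])[i]? with
    | none => simpa [f, hi] using ha
    | some b => simpa [f, hi] using hQ b (List.mem_of_getElem? hi)
  have hhist : hist f l.length = l ++ [a] := by
    apply List.ext_getElem
    · simp [hist]
    · intro i _ hi
      simp [f, hist, List.getElem?_eq_getElem hi]
  have hlast : f l.length = a := by simp [f]
  have h := hP f hf l.length
  rwa [hhist, hlast] at h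

end Hist

section Games

variable {X : Type u} [TopologicalSpace X]

theorem IsOpenCover.exists_mem {𝒰 : Set (Set X)} (h𝒰 : IsOpenCover 𝒰) (x : X) :
    ∃ U ∈ 𝒰, x ∈ U :=
  Set.sUnion_eq_univ_iff.1 h𝒰.2 x

theorem isOpenCover_singleton_univ : IsOpenCover ({univ} : Set (Set X)) :=
  ⟨by simp, by simp⟩

theorem rothOneWin_of_isEmpty [IsEmpty X] : RothOneWin X :=
  ⟨fun _ => ∅, fun _ => ⟨by simp, Subsingleton.elim _ _⟩, fun _ hg => (hg 0).elim⟩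

theorem RothOneWin.poTwoWin (h : RothOneWin X) : POTwoWin X := by
  obtain ⟨σ, hσ, hwin⟩ := h
  let step (r : List (Set X)) (x : X) : Set X := Classical.epsilon fun U => U ∈ σ r ∧ x ∈ U
  have hstep (r : List (Set X)) (x : X) : step r x ∈ σ r ∧ x ∈ step r x :=
    Classical.epsilon_spec ((hσ r).exists_mem x)
  refine ⟨fun l => (replay step l).getLastD ∅, fun x => ?_⟩
  simp only [getLastD_replay_hist]
  refine ⟨fun n => ⟨(hσ _).1 _ (hstep _ _).1, (hstep _ _).2⟩, hwin _ fun n => ?_⟩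
  rw [← replay_map_range]
  exact (hstep _ _).1

theorem POOneWin.rothTwoWin (h : POOneWin X) : RothTwoWin X := by
  obtain ⟨τ, hwin⟩ := h
  let step (r : List (Set X)) (𝒰 : Set (Set X)) : Set X :=
    Classical.epsilon fun U => U ∈ 𝒰 ∧ τ r ∈ U
  refine ⟨fun l => (replay step l).getLastD ∅, fun 𝒰 h𝒰 => ?_⟩
  have hstep (r : List (Set X)) (n : ℕ) : step r (𝒰 n) ∈ 𝒰 n ∧ τ r ∈ step r (𝒰 n) :=
    Classical.epsilon_spec ((h𝒰 n).exists_mem (τ r))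
  simp only [getLastD_replay_hist]
  refine ⟨fun n => (hstep _ n).1, hwin _ fun n => ?_⟩
  rw [← replay_map_range]
  exact ⟨(h𝒰 n).1 _ (hstep _ n).1, (hstep _ n).2⟩

theorem POTwoWin.rothOneWin (h : POTwoWin X) : RothOneWin X := by
  cases isEmpty_or_nonempty X
  · exact rothOneWin_of_isEmpty
  obtain ⟨τ, hτ⟩ := h
  have legal (q : List X) (x : X) : IsOpen (τ (q ++ [x])) ∧ x ∈ τ (q ++ [x]) :=
    append_singleton_of_forall_hist (Q := fun _ => True)
      (P := fun l x => IsOpen (τ l) ∧ x ∈ τ l) (fun f _ => (hτ f).1)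
      (fun _ _ => trivial) trivial
  let step (q : List X) (U : Set X) : X := Classical.epsilon fun x => τ (q ++ [x]) = U
  refine ⟨fun l => range fun x => τ (replay step l ++ [x]), fun l => ⟨?_, ?_⟩, fun g hg => ?_⟩
  · rintro _ ⟨x, rfl⟩
    exact (legal _ x).1
  · exact sUnion_eq_univ_iff.2 fun x => ⟨_, ⟨x, rfl⟩, (legal _ x).2⟩
  set x : ℕ → X := fun n => step (replay step ((List.range n).map g)) (g n)
  have hx (n : ℕ) : τ (hist x n) = g n := by
    rw [hist_eq_append, ← replay_map_range]
    exact Classical.epsilon_spec (hg n)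
  simpa only [hx] using (hτ x).2

def RothTwoWinning (σ : List (Set (Set X)) → Set X) : Prop :=
  ∀ 𝒰 : ℕ → Set (Set X), (∀ n, IsOpenCover (𝒰 n)) →
    (∀ n, σ (hist 𝒰 n) ∈ 𝒰 n) ∧ (⋃ n, σ (hist 𝒰 n)) = univ

def CanForceInto (σ : List (Set (Set X)) → Set X) (h : List (Set (Set X))) (U : Set X) : Prop :=
  ∃ 𝒰 : Set (Set X), IsOpenCover 𝒰 ∧ σ (h ++ [𝒰]) ⊆ U

theorem RothTwoWinning.exists_forall_canForceInto {σ : List (Set (Set X)) → Set X}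
    (hσ : RothTwoWinning σ) {h : List (Set (Set X))} (hh : ∀ 𝒱 ∈ h, IsOpenCover 𝒱) :
    ∃ x : X, ∀ U, IsOpen U → x ∈ U → CanForceInto σ h U := by
  by_contra! hbad
  let 𝒲 : Set (Set X) := {U | IsOpen U ∧ ¬CanForceInto σ h U}
  have h𝒲 : IsOpenCover 𝒲 := ⟨fun U hU => hU.1, sUnion_eq_univ_iff.2 fun x => by
    obtain ⟨U, hU, hxU, hUσ⟩ := hbad x
    exact ⟨U, ⟨hU, hUσ⟩, hxU⟩⟩
  have hmem : σ (h ++ [𝒲]) ∈ 𝒲 :=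
    append_singleton_of_forall_hist (P := fun l 𝒲 => σ l ∈ 𝒲) (fun 𝒰 h𝒰 => (hσ 𝒰 h𝒰).1) hh h𝒲
  exact hmem.2 ⟨𝒲, h𝒲, subset_rfl⟩

theorem RothTwoWin.poOneWin (h : RothTwoWin X) : POOneWin X := by
  classical
  obtain ⟨σ, hσ : RothTwoWinning σ⟩ := h
  let step (h : List (Set (Set X))) (U : Set X) : Set (Set X) :=
    if hU : CanForceInto σ h U then hU.choose else {univ}
  have step_cover (h : List (Set (Set X))) (U : Set X) : IsOpenCover (step h U) := by
    unfold step
    split_ifs with hU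
    exacts [hU.choose_spec.1, isOpenCover_singleton_univ]
  have : Nonempty X := (hσ.exists_forall_canForceInto (h := []) (by simp)).nonempty
  let point (h : List (Set (Set X))) : X :=
    Classical.epsilon fun x => ∀ U, IsOpen U → x ∈ U → CanForceInto σ h U
  have point_spec {h : List (Set (Set X))} (hh : ∀ 𝒱 ∈ h, IsOpenCover 𝒱) :
      ∀ U, IsOpen U → point h ∈ U → CanForceInto σ h U :=
    Classical.epsilon_spec (hσ.exists_forall_canForceInto hh)
  refine ⟨fun l => point (replay step l), fun g hg => ?_⟩
  set 𝒰 : ℕ → Set (Set X) := fun n => step (replay step ((List.range n).map g)) (g n)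
  have hsub (n : ℕ) : σ (hist 𝒰 n) ⊆ g n := by
    have hprefix : replay step ((List.range n).map g) = (List.range n).map 𝒰 :=
      replay_map_range ..
    obtain ⟨hopen, hmem⟩ := hg n
    have hforce : CanForceInto σ ((List.range n).map 𝒰) (g n) := by
      refine point_spec (List.forall_mem_map.2 fun _ _ => step_cover _ _) _ hopen ?_
      simpa only [hprefix] using hmem
    have h𝒰n : 𝒰 n = hforce.choose := by
      simp only [𝒰, hprefix]
      exact dif_pos hforce
    rw [hist_eq_append, h𝒰n]
    exact hforce.choose_spec.2
  have hcover := (hσ 𝒰 fun n => step_cover _ _).2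
  exact eq_univ_of_univ_subset (hcover ▸ iUnion_mono hsub)

end Games

/-- The Rothberger game and the point-open game are dual. -/
theorem rothberger_pointOpen_dual (X : Type u) [TopologicalSpace X] :
    (RothOneWin X ↔ POTwoWin X) ∧ (RothTwoWin X ↔ POOneWin X) :=
  ⟨⟨RothOneWin.poTwoWin, POTwoWin.rothOneWin⟩, ⟨RothTwoWin.poOneWin, POOneWin.rothTwoWin⟩⟩
end

section
/- If X is a regular Lindelöf scattered space, then the Gδ-modification X_δ is Lindelöf. -/
open Set TopologicalSpace

universe u

/-!
Fix an open cover of `X_δ` and call a set small if countably many members of the cover cover it.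
Small sets form a σ-ideal, and every point lies in a small Gδ set. If some point has no small
neighbourhood, scatteredness yields such a point `x` that is isolated among them by an open set
`U`. Closed subsets of `U ∖ {x}` are Lindelöf and locally small, hence small. By regularity a
neighbourhood of `x` is covered by a small Gδ set through `x` together with countably many such
closed sets, so it is small after all. Thus every point has a small neighbourhood, and `X` itself
is small because it is Lindelöf.
-/

open Filter Topology

section

variable {X : Type u} [TopologicalSpace X]

theorem exists_isGδ_subset_of_isOpen_gdeltaTop {U : Set X}
    (hU : IsOpen[gdeltaTop X] U) {x : X} (hx : x ∈ U) : ∃ G, IsGδ G ∧ x ∈ G ∧ G ⊆ U := by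
  have hbasis := @isTopologicalBasis_of_subbasis_of_inter X (gdeltaTop X) {s | IsGδ s} rfl
    fun _ hs _ ht => hs.inter ht
  rw [insert_eq_of_mem (show univ ∈ {s : Set X | IsGδ s} from IsGδ.univ)] at hbasis
  exact @IsTopologicalBasis.exists_subset_of_mem_open X (gdeltaTop X) _ hbasis x U hx hU

theorem IsGδ.exists_mem_nhds_subset_union_iUnion_isClosed [RegularSpace X] {G U : Set X} {x : X}
    (hG : IsGδ G) (hxG : x ∈ G) (hU : U ∈ 𝓝 x) :
    ∃ W ∈ 𝓝 x, ∃ F : ℕ → Set X, (∀ n, IsClosed (F n) ∧ F n ⊆ U \ {x}) ∧ W ⊆ G ∪ ⋃ n, F n := by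
  obtain ⟨V, hV_open, rfl⟩ := hG.eq_iInter_nat
  obtain ⟨D, hD_nhds, hD_closed, hDU⟩ := exists_mem_nhds_isClosed_subset hU
  refine ⟨D, hD_nhds, fun n => D \ V n, fun n => ⟨hD_closed.sdiff (hV_open n), ?_⟩, ?_⟩
  · exact fun y ⟨hyD, hyV⟩ => ⟨hDU hyD, fun hyx => hyV (hyx ▸ mem_iInter.1 hxG n)⟩
  · intro y hyD
    by_cases hy : ∀ n, y ∈ V n
    · exact Or.inl (mem_iInter.2 hy)
    · push Not at hy
      obtain ⟨n, hn⟩ := hy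
      exact Or.inr (mem_iUnion.2 ⟨n, hyD, hn⟩)

theorem Scattered.induction_of_isGδ [RegularSpace X] [LindelofSpace X] (hX : Scattered X)
    {p : Set X → Prop} (hmono : ∀ ⦃s t⦄, s ⊆ t → p t → p s)
    (hcountable_union : ∀ S : Set (Set X), S.Countable → (∀ s ∈ S, p s) → p (⋃₀ S))
    (hgδ : ∀ x, ∃ G, IsGδ G ∧ x ∈ G ∧ p G) : p univ := by
  set bad := {x | ∀ t ∈ 𝓝 x, ¬ p t}
  have hlocal : ∀ s, IsLindelof s → Disjoint s bad → p s := by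
    refine fun s hs hsbad => hs.induction_on hmono hcountable_union fun y hy => ?_
    have hy_good : ¬ ∀ t ∈ 𝓝 y, ¬ p t := disjoint_left.1 hsbad hy
    push Not at hy_good
    obtain ⟨t, ht, hpt⟩ := hy_good
    exact ⟨t, mem_nhdsWithin_of_mem_nhds ht, hpt⟩
  by_contra hp
  obtain ⟨x, hx_bad, U, hU_open, hU_bad⟩ := hX bad <| by
    refine nonempty_iff_ne_empty.2 fun hempty => hp (hlocal _ isLindelof_univ ?_)
    rw [hempty]
    exact disjoint_empty _
  have hclosed_small : ∀ F, IsClosed F → F ⊆ U \ {x} → p F := by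
    refine fun F hF hFU => hlocal F hF.isLindelof (disjoint_left.2 fun y hy hy_bad => ?_)
    exact (hFU hy).2 (hU_bad.subset ⟨(hFU hy).1, hy_bad⟩)
  obtain ⟨G, hG, hxG, hpG⟩ := hgδ x
  have hxU : x ∈ U := (hU_bad.symm.subset rfl).1
  obtain ⟨W, hW, F, hF, hWF⟩ :=
    hG.exists_mem_nhds_subset_union_iUnion_isClosed hxG (hU_open.mem_nhds hxU)
  have hpF : p (⋃ n, F n) := hcountable_union _ (countable_range F)
    (forall_mem_range.2 fun n => hclosed_small _ (hF n).1 (hF n).2)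
  have hpGF : p (G ∪ ⋃ n, F n) := by
    rw [← sUnion_pair]
    exact hcountable_union _ ((countable_singleton _).insert G) (by simp [hpG, hpF])
  exact hx_bad W hW (hmono hWF hpGF)

end

/-- regular Lindelöf scattered implies the Gδ-modification is Lindelöf. -/
theorem lindelof_scattered_gdelta_lindelof (X : Type u) [TopologicalSpace X]
    [RegularSpace X] [LindelofSpace X] (h : Scattered X) :
    @LindelofSpace X (gdeltaTop X) := by
  refine @LindelofSpace.mk X (gdeltaTop X)
    (@isLindelof_of_countable_subcover X (gdeltaTop X) univ fun {ι} U hU hcover => ?_)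
  refine h.induction_of_isGδ (p := fun s => ∃ t : Set ι, t.Countable ∧ s ⊆ ⋃ i ∈ t, U i)
    (fun s s' hss' ⟨t, ht, hs'⟩ => ⟨t, ht, hss'.trans hs'⟩) ?_ ?_
  · intro S hS hSp
    choose! t ht hst using hSp
    refine ⟨⋃ s ∈ S, t s, hS.biUnion ht, sUnion_subset fun s hs => (hst s hs).trans ?_⟩
    exact biUnion_subset_biUnion_left (subset_biUnion_of_mem hs)
  · intro x
    obtain ⟨i, hxi⟩ := mem_iUnion.1 (hcover (mem_univ x))
    obtain ⟨G, hG, hxG, hGU⟩ := exists_isGδ_subset_of_isOpen_gdeltaTop (hU i) hxi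
    exact ⟨G, hG, hxG, {i}, countable_singleton i, by simpa using hGU⟩
end

section
/- A topological space X satisfies S₁(ℛ, 𝒪) if and only if X is a Rothberger space, where ℛ is the family of R-covers of X. -/
/-!
A Rothberger subspace `S` picks, from any sequence of open covers of `X`, one member of each
whose union contains `S`. Hence the unions of such selections from a sequence of open covers
form an R-cover. Splitting the given sequence of covers into infinitely many infinite rows
(via `Nat.pair`) and applying `S₁(ℛ, 𝒪)` to the resulting R-covers yields one union per row;
together they cover `X`, and the selections behind them merge into a single selection.
-/

open Set TopologicalSpace

universe u

/-- An R-cover: an open cover such that every Rothberger subspace is contained in a member. -/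
def IsRCover {X : Type u} [TopologicalSpace X] (𝒰 : Set (Set X)) : Prop :=
  IsOpenCover 𝒰 ∧ ∀ S : Set X, RothbergerSpace S → ∃ U ∈ 𝒰, S ⊆ U

def selectionUnions {X : Type u} (𝒰 : ℕ → Set (Set X)) : Set (Set X) :=
  {V | ∃ g : ℕ → Set X, (∀ m, g m ∈ 𝒰 m) ∧ V = ⋃ m, g m}

theorem RothbergerSpace.exists_selection_subset_iUnion {X : Type u} [TopologicalSpace X]
    {S : Set X} (hS : RothbergerSpace S) {𝒰 : ℕ → Set (Set X)}
    (hopen : ∀ n, ∀ U ∈ 𝒰 n, IsOpen U) (hcover : ∀ n, S ⊆ ⋃₀ 𝒰 n) :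
    ∃ g : ℕ → Set X, (∀ n, g n ∈ 𝒰 n) ∧ S ⊆ ⋃ n, g n := by
  have htrace : ∀ n, IsOpenCover ((Subtype.val ⁻¹' ·) '' 𝒰 n : Set (Set S)) := by
    refine fun n => ⟨?_, ?_⟩
    · rintro _ ⟨U, hU, rfl⟩
      exact continuous_subtype_val.isOpen_preimage U (hopen n U hU)
    · rw [sUnion_image, ← preimage_iUnion₂, ← sUnion_eq_biUnion, eq_univ_iff_forall]
      exact fun x => hcover n x.2
  obtain ⟨f, hf, hfcover⟩ := hS _ htrace
  choose g hg hgf using hf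
  refine ⟨g, hg, fun x hx => ?_⟩
  obtain ⟨n, hn⟩ := mem_iUnion.1 (hfcover.symm ▸ mem_univ (⟨x, hx⟩ : S))
  rw [← hgf n] at hn
  exact mem_iUnion.2 ⟨n, hn⟩

theorem isRCover_selectionUnions {X : Type u} [TopologicalSpace X] {𝒰 : ℕ → Set (Set X)}
    (h𝒰 : ∀ n, IsOpenCover (𝒰 n)) : IsRCover (selectionUnions 𝒰) := by
  refine ⟨⟨?_, eq_univ_of_forall fun x => ?_⟩, fun S hS => ?_⟩
  · rintro _ ⟨g, hg, rfl⟩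
    exact isOpen_iUnion fun m => (h𝒰 m).1 _ (hg m)
  · have hx : ∀ m, ∃ U ∈ 𝒰 m, x ∈ U := fun m =>
      mem_sUnion.1 ((h𝒰 m).2.symm ▸ mem_univ x)
    choose g hg hxg using hx
    exact ⟨⋃ m, g m, ⟨g, hg, rfl⟩, mem_iUnion.2 ⟨0, hxg 0⟩⟩
  · obtain ⟨g, hg, hSg⟩ := hS.exists_selection_subset_iUnion (fun n => (h𝒰 n).1)
      (fun n => (h𝒰 n).2.symm ▸ subset_univ S)
    exact ⟨⋃ m, g m, ⟨g, hg, rfl⟩, hSg⟩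

theorem exists_selection_iUnion_eq_of_mem_selectionUnions {X : Type u}
    {𝒰 : ℕ → Set (Set X)} {F : ℕ → Set X}
    (hF : ∀ k, F k ∈ selectionUnions fun m => 𝒰 (Nat.pair k m)) :
    ∃ f : ℕ → Set X, (∀ n, f n ∈ 𝒰 n) ∧ ⋃ n, f n = ⋃ k, F k := by
  choose g hg hgF using hF
  refine ⟨fun n => g n.unpair.1 n.unpair.2, fun n => ?_, ?_⟩
  · simpa only [Nat.pair_unpair] using hg n.unpair.1 n.unpair.2
  · simp only [hgF, iUnion_unpair g]

/-- S₁(ℛ, 𝒪) holds iff X is Rothberger. -/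
theorem S1_rcover_iff_rothberger (X : Type u) [TopologicalSpace X] :
    (∀ 𝒰 : ℕ → Set (Set X), (∀ n, IsRCover (𝒰 n)) →
      ∃ f : ℕ → Set X, (∀ n, f n ∈ 𝒰 n) ∧ (⋃ n, f n) = univ) ↔
    RothbergerSpace X := by
  refine ⟨fun hS1 𝒰 h𝒰 => ?_, fun hX 𝒰 h𝒰 => hX 𝒰 fun n => (h𝒰 n).1⟩
  obtain ⟨F, hF, hFcover⟩ :=
    hS1 (fun k => selectionUnions fun m => 𝒰 (Nat.pair k m))
      fun k => isRCover_selectionUnions fun m => h𝒰 _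
  obtain ⟨f, hf, hfF⟩ := exists_selection_iUnion_eq_of_mem_selectionUnions hF
  exact ⟨f, hf, hfF.trans hFcover⟩
end

section
/- The one-point Lindelöfication X = A ∪ {p} of an uncountable discrete space A is a Lindelöf scattered regular space that is not σ-compact, and Two has a winning strategy in the Rothberger game on X. -/
/-!
Every open set containing the point at infinity `none` is cocountable. Hence Two wins the
Rothberger game: in the first inning she takes a member of One's cover containing `none`, and
afterwards, one inning at a time, a member containing the next point of an enumeration of the
countably many points that first set misses. In particular the space is Lindelöf. All other points
are isolated, which gives scatteredness and regularity. Countable sets are closed, so a countably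
infinite subset of a compact set would be compact and discrete; hence compact sets are finite and
an uncountable space of this kind is not σ-compact.
-/

open Set TopologicalSpace

universe u

/-- The one-point Lindelöfication of a discrete space `A`: the point `none` has
the cocountable sets as neighbourhoods, and all points of `A` are isolated. -/
def lindTop (A : Type u) : TopologicalSpace (Option A) where
  IsOpen s := none ∈ s → sᶜ.Countable
  isOpen_univ := fun _ => by simp
  isOpen_inter := fun s t hs ht h => by
    rw [Set.compl_inter]; exact (hs h.1).union (ht h.2)
  isOpen_sUnion := fun S h hmem => by
    obtain ⟨s, hsS, hns⟩ := hmem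
    exact Set.Countable.mono (Set.compl_subset_compl.2 (Set.subset_sUnion_of_mem hsS))
      (h s hsS hns)

section RothbergerStrategy

variable {X : Type u}

noncomputable def memberContaining (𝒞 : Set (Set X)) (x : X) : Set X :=
  Classical.epsilon fun U => U ∈ 𝒞 ∧ x ∈ U

theorem memberContaining_spec {𝒞 : Set (Set X)} (h𝒞 : ⋃₀ 𝒞 = univ) (x : X) :
    memberContaining 𝒞 x ∈ 𝒞 ∧ x ∈ memberContaining 𝒞 x :=
  Classical.epsilon_spec (h𝒞.symm ▸ mem_univ x : x ∈ ⋃₀ 𝒞)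

noncomputable def enumFrom (p : X) (s : Set X) : ℕ → X :=
  haveI : Nonempty X := ⟨p⟩
  Classical.epsilon fun e : ℕ → X => e 0 = p ∧ s ⊆ range e

theorem enumFrom_spec (p : X) {s : Set X} (hs : s.Countable) :
    enumFrom p s 0 = p ∧ s ⊆ range (enumFrom p s) := by
  have : Nonempty X := ⟨p⟩
  obtain ⟨f, hf⟩ := countable_iff_exists_subset_range.1 hs
  have : ∃ e : ℕ → X, e 0 = p ∧ s ⊆ range e := by
    refine ⟨fun | 0 => p | k + 1 => f k, rfl, fun x hx => ?_⟩
    obtain ⟨k, rfl⟩ := hf hx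
    exact ⟨k + 1, rfl⟩
  exact Classical.epsilon_spec this

noncomputable def cocountableStrategy (p : X) (l : List (Set (Set X))) : Set X :=
  memberContaining l.getLastI (enumFrom p (memberContaining l.headI p)ᶜ (l.length - 1))

theorem hist_length (f : ℕ → X) (n : ℕ) : (hist f n).length = n + 1 := by
  simp [hist]

theorem hist_headI [Inhabited X] (f : ℕ → X) (n : ℕ) : (hist f n).headI = f 0 := by
  simp [hist, List.range_succ_eq_map]

theorem hist_getLastI [Inhabited X] (f : ℕ → X) (n : ℕ) : (hist f n).getLastI = f n := by
  simp [hist, List.range_succ, List.getLastI_eq_getLast?_getD]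

theorem cocountableStrategy_hist (p : X) (𝒰 : ℕ → Set (Set X)) (n : ℕ) :
    cocountableStrategy p (hist 𝒰 n) =
      memberContaining (𝒰 n) (enumFrom p (memberContaining (𝒰 0) p)ᶜ n) := by
  simp only [cocountableStrategy, hist_headI, hist_getLastI, hist_length, Nat.add_sub_cancel]

end RothbergerStrategy

section General

variable {X : Type u} [TopologicalSpace X]

theorem rothTwoWin_of_isOpen_compl_countable (p : X)
    (hp : ∀ U : Set X, IsOpen U → p ∈ U → Uᶜ.Countable) : RothTwoWin X := by
  refine ⟨cocountableStrategy p, fun 𝒰 h𝒰 => ?_⟩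
  set U₀ := memberContaining (𝒰 0) p
  have hU₀ := memberContaining_spec (h𝒰 0).2 p
  obtain ⟨he₀, hcover⟩ := enumFrom_spec p (hp U₀ ((h𝒰 0).1 U₀ hU₀.1) hU₀.2)
  simp only [cocountableStrategy_hist]
  refine ⟨fun n => (memberContaining_spec (h𝒰 n).2 _).1, eq_univ_of_forall fun x => ?_⟩
  by_cases hx : x ∈ U₀
  · exact mem_iUnion.2 ⟨0, by rwa [he₀]⟩
  · obtain ⟨k, rfl⟩ := hcover hx
    exact mem_iUnion.2 ⟨k, (memberContaining_spec (h𝒰 k).2 _).2⟩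

theorem RothTwoWin.rothbergerSpace (h : RothTwoWin X) : RothbergerSpace X := by
  obtain ⟨σ, hσ⟩ := h
  exact fun 𝒰 h𝒰 => ⟨fun n => σ (hist 𝒰 n), hσ 𝒰 h𝒰⟩

theorem RothbergerSpace.lindelofSpace (h : RothbergerSpace X) : LindelofSpace X := by
  refine ⟨isLindelof_iff_countable_subcover.2 fun U hUo hU => ?_⟩
  obtain ⟨f, hf, hcover⟩ := h (fun _ => range U) fun _ =>
    ⟨forall_mem_range.2 hUo, by rw [sUnion_range]; exact univ_subset_iff.1 hU⟩
  choose i hi using hf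
  refine ⟨range i, countable_range i, fun x _ => ?_⟩
  obtain ⟨n, hn⟩ := mem_iUnion.1 (hcover.symm ▸ mem_univ x)
  exact mem_iUnion₂.2 ⟨i n, mem_range_self n, (hi n).symm ▸ hn⟩

section IsolatedOutsidePoint

variable {p : X} (h : ∀ x ≠ p, IsOpen {x})
include h

theorem isOpen_of_notMem_of_isOpen_singleton {s : Set X} (hs : p ∉ s) : IsOpen s := by
  rw [← biUnion_of_singleton s]
  exact isOpen_biUnion fun x hx => h x (ne_of_mem_of_not_mem hx hs)

theorem scattered_of_isOpen_singleton : Scattered X := by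
  intro S hS
  by_cases hSp : ∃ x ∈ S, x ≠ p
  · obtain ⟨x, hxS, hxp⟩ := hSp
    exact ⟨x, hxS, {x}, h x hxp, singleton_inter_of_mem hxS⟩
  · push Not at hSp
    obtain rfl : S = {p} := (hS.subset_singleton_iff).1 hSp
    exact ⟨p, rfl, univ, isOpen_univ, univ_inter _⟩

theorem regularSpace_of_isOpen_singleton [T1Space X] : RegularSpace X := by
  refine .of_exists_mem_nhds_isClosed_subset fun x s hs => ?_
  by_cases hx : x = p
  · subst hx
    obtain ⟨V, hVs, hVo, hxV⟩ := mem_nhds_iff.1 hs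
    have hVc : IsOpen Vᶜ := isOpen_of_notMem_of_isOpen_singleton h fun hxVc => hxVc hxV
    exact ⟨V, hVo.mem_nhds hxV, isOpen_compl_iff.1 hVc, hVs⟩
  · exact ⟨{x}, (h x hx).mem_nhds rfl, isClosed_singleton,
      singleton_subset_iff.2 (mem_of_mem_nhds hs)⟩

end IsolatedOutsidePoint

section CountableClosed

variable (hcl : ∀ s : Set X, s.Countable → IsClosed s)
include hcl

theorem IsCompact.finite_of_countable_isClosed {K : Set X} (hK : IsCompact K) : K.Finite := by
  by_contra hKi
  obtain ⟨T, hTK, hTc, hTi⟩ := Set.Infinite.exists_subset_countable_infinite hKi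
  have hTd : IsDiscrete T := isDiscrete_iff_forall_mem_exists_isClosed.2 fun s hs =>
    ⟨s, hcl s (hTc.mono hs), inter_eq_left.2 hs⟩
  exact hTi ((hK.of_isClosed_subset (hcl T hTc) hTK).finite hTd)

theorem not_sigmaCompactSpace_of_countable_isClosed [Uncountable X] : ¬ SigmaCompactSpace X := by
  intro hX
  obtain ⟨K, hK, hKU⟩ := hX.isSigmaCompact_univ
  have : (univ : Set X).Countable :=
    hKU ▸ countable_iUnion fun n => ((hK n).finite_of_countable_isClosed hcl).countable
  exact not_countable (countable_univ_iff.1 this)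

end CountableClosed

end General

section OnePointLindelofication

variable {A : Type u}

attribute [local instance] lindTop

theorem lindTop_isOpen_of_none_notMem {s : Set (Option A)} (hs : none ∉ s) : IsOpen s :=
  fun h => absurd h hs

theorem lindTop_isClosed_of_countable {s : Set (Option A)} (hs : s.Countable) : IsClosed s :=
  ⟨fun _ => by rwa [compl_compl]⟩

theorem lindTop_t1Space : T1Space (Option A) :=
  ⟨fun _ => lindTop_isClosed_of_countable (countable_singleton _)⟩

end OnePointLindelofication

/-- the one-point Lindelöfication of an uncountable discrete space is a
Lindelöf scattered regular space which is not σ-compact, and Two has a winning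
strategy in the Rothberger game on it. -/
theorem onePointLindelofication (A : Type u) [Uncountable A] :
    @LindelofSpace (Option A) (lindTop A) ∧
    @Scattered (Option A) (lindTop A) ∧
    @RegularSpace (Option A) (lindTop A) ∧
    ¬ @SigmaCompactSpace (Option A) (lindTop A) ∧
    @RothTwoWin (Option A) (lindTop A) := by
  let := lindTop A
  have := lindTop_t1Space (A := A)
  have hnone : ∀ U : Set (Option A), IsOpen U → none ∈ U → Uᶜ.Countable := fun _ hU => hU
  have hsome : ∀ x : Option A, x ≠ none → IsOpen {x} := fun _ hx =>
    lindTop_isOpen_of_none_notMem (Ne.symm hx)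
  have hroth := rothTwoWin_of_isOpen_compl_countable none hnone
  exact ⟨hroth.rothbergerSpace.lindelofSpace, scattered_of_isOpen_singleton hsome,
    regularSpace_of_isOpen_singleton hsome,
    not_sigmaCompactSpace_of_countable_isClosed fun _ => lindTop_isClosed_of_countable, hroth⟩
end

section
/- Let X be the real line with the topology refining the Euclidean topology by declaring every countable set closed. Then every compact subset of X is finite. -/
open Set TopologicalSpace

universe u

/-- The refinement of the Euclidean topology on ℝ in which every countable set is closed. -/
def ctblClosedTop : TopologicalSpace ℝ :=
  generateFrom {s : Set ℝ | ∃ U C : Set ℝ, IsOpen U ∧ C.Countable ∧ s = U \ C}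

open Topology

/-- An accumulation point `x` of a countable set `C` would also be one of the closed set
`C \ {x}`, which does not contain it. -/
theorem IsCompact.finite_of_forall_countable_isClosed {X : Type u} [TopologicalSpace X]
    (hclosed : ∀ C : Set X, C.Countable → IsClosed C) {K : Set X} (hK : IsCompact K) :
    K.Finite := by
  by_contra hinf
  obtain ⟨C, hCK, hCcount, hCinf⟩ := Set.Infinite.exists_subset_countable_infinite hinf
  obtain ⟨x, -, hacc⟩ := hCinf.exists_accPt_of_subset_isCompact hK hCK
  have hnhds : (C \ {x})ᶜ ∈ 𝓝 x :=
    (hclosed _ (hCcount.mono sdiff_subset)).isOpen_compl.mem_nhds fun h => h.2 rfl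
  obtain ⟨y, ⟨hyU, hyC⟩, hyx⟩ := accPt_iff_nhds.mp hacc _ hnhds
  exact hyU ⟨hyC, hyx⟩

theorem isClosed_ctblClosedTop_of_countable {C : Set ℝ} (hC : C.Countable) :
    IsClosed[ctblClosedTop] C :=
  @IsClosed.mk ℝ ctblClosedTop C
    (isOpen_generateFrom_of_mem ⟨univ, C, isOpen_univ, hC, compl_eq_univ_sdiff C⟩)

/-- every compact subset of this space is finite. -/
theorem compact_finite_ctblClosedTop (K : Set ℝ) (hK : @IsCompact ℝ ctblClosedTop K) :
    K.Finite :=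
  @IsCompact.finite_of_forall_countable_isClosed ℝ ctblClosedTop
    (fun _ => isClosed_ctblClosedTop_of_countable) K hK
end

section
/- Let L be a Luzin set of irrational reals and let X = L ∪ ℚ be topologized so that points of L are isolated and basic neighborhoods of q ∈ ℚ are {q} ∪ {x ∈ L : |x − q| < 1/(n+1)} for n ∈ ω. Then X is Lindelöf and scattered, but X_δ is not Lindelöf. -/
open Set TopologicalSpace

universe u

def ratReals : Set ℝ := Set.range ((↑) : ℚ → ℝ)

/-- The base for the topology on L ∪ ℚ: points of L are isolated, and basic
neighbourhoods of q ∈ ℚ are {q} ∪ {x ∈ L : |x − q| < 1/(n+1)}. -/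
def luzinBase (L : Set ℝ) : Set (Set ↥(L ∪ ratReals)) :=
  {s | (∃ x : ↥(L ∪ ratReals), (x : ℝ) ∈ L ∧ s = {x}) ∨
       (∃ q : ↥(L ∪ ratReals), (q : ℝ) ∉ L ∧ ∃ n : ℕ,
         s = {y : ↥(L ∪ ratReals) |
           y = q ∨ ((y : ℝ) ∈ L ∧ |(y : ℝ) - (q : ℝ)| < 1 / (n + 1))})}

def luzinTop (L : Set ℝ) : TopologicalSpace ↥(L ∪ ratReals) :=
  generateFrom (luzinBase L)

/-!
Outside the countable set `ℚ` the space is discrete, and an open set `U ⊇ ℚ` contains, around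
each rational `q`, all points of `L` in an interval centred at `q`. The union of those intervals
is an open dense subset of `ℝ`, so the Luzin property leaves only countably many points of `L`
outside `U`; this makes the space Lindelöf. Every singleton is a `Gδ` (for `q ∈ ℚ` it is the
intersection of its basic neighbourhoods), so the `Gδ`-modification is discrete and uncountable.
-/

theorem lindelofSpace_of_countable_compl_of_superset {X : Type*} [TopologicalSpace X]
    {S : Set X} (hS : S.Countable) (hcompl : ∀ U, IsOpen U → S ⊆ U → Uᶜ.Countable) :
    LindelofSpace X := by
  refine ⟨isLindelof_iff_countable_subcover.mpr fun U hU hcov => ?_⟩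
  obtain ⟨t, htc, hSt⟩ :=
    hS.isLindelof.elim_countable_subcover U hU ((subset_univ S).trans hcov)
  obtain ⟨t', ht'c, hrest⟩ :=
    (hcompl _ (isOpen_biUnion fun i _ => hU i) hSt).isLindelof.elim_countable_subcover U hU
      ((subset_univ _).trans hcov)
  refine ⟨t ∪ t', htc.union ht'c, fun x _ => ?_⟩
  by_cases hx : x ∈ ⋃ i ∈ t, U i
  · exact biUnion_subset_biUnion_left subset_union_left hx
  · exact biUnion_subset_biUnion_left subset_union_right (hrest hx)

theorem countable_of_lindelofSpace_gdeltaTop {X : Type*} [TopologicalSpace X]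
    (hX : ∀ x : X, IsGδ ({x} : Set X)) (hlin : @LindelofSpace X (gdeltaTop X)) : Countable X :=
  @countable_of_Lindelof_of_discrete X (gdeltaTop X) hlin
    (@discreteTopology_iff_isOpen_singleton X (gdeltaTop X) |>.mpr fun x =>
      GenerateOpen.basic _ (hX x))

open Topology

namespace LuzinSpace

variable {L : Set ℝ}

variable (L) in
def nbhd (q : ↥(L ∪ ratReals)) (n : ℕ) : Set ↥(L ∪ ratReals) :=
  {y | y = q ∨ ((y : ℝ) ∈ L ∧ |(y : ℝ) - (q : ℝ)| < 1 / (n + 1))}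

theorem mem_nbhd_self (q : ↥(L ∪ ratReals)) (n : ℕ) : q ∈ nbhd L q n := Or.inl rfl

theorem nbhd_antitone (q : ↥(L ∪ ratReals)) : Antitone (nbhd L q) := by
  intro m n hmn y hy
  rcases hy with rfl | ⟨hyL, hlt⟩
  · exact mem_nbhd_self y m
  · refine Or.inr ⟨hyL, hlt.trans_le ?_⟩
    gcongr

theorem iInter_nbhd (q : ↥(L ∪ ratReals)) : ⋂ n, nbhd L q n = {q} := by
  refine Subset.antisymm (fun y hy => ?_)
    (singleton_subset_iff.mpr (mem_iInter.mpr (mem_nbhd_self q)))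
  by_contra hne
  have hpos : 0 < |(y : ℝ) - q| := abs_pos.mpr (sub_ne_zero.mpr fun h => hne (Subtype.ext h))
  obtain ⟨n, hn⟩ := exists_nat_one_div_lt hpos
  rcases mem_iInter.mp hy n with rfl | ⟨_, hlt⟩
  · exact hne rfl
  · exact hlt.not_gt hn

theorem isOpen_nbhd {q : ↥(L ∪ ratReals)} (hq : (q : ℝ) ∉ L) (n : ℕ) :
    IsOpen[luzinTop L] (nbhd L q n) :=
  GenerateOpen.basic _ (Or.inr ⟨q, hq, n, rfl⟩)

theorem isOpen_singleton_of_mem {x : ↥(L ∪ ratReals)} (hx : (x : ℝ) ∈ L) :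
    IsOpen[luzinTop L] {x} :=
  GenerateOpen.basic _ (Or.inl ⟨x, hx, rfl⟩)

theorem exists_nbhd_subset {U : Set ↥(L ∪ ratReals)} (hU : IsOpen[luzinTop L] U)
    {q : ↥(L ∪ ratReals)} (hqU : q ∈ U) (hq : (q : ℝ) ∉ L) : ∃ n, nbhd L q n ⊆ U := by
  induction hU with
  | basic s hs =>
    rcases hs with ⟨x, hxL, rfl⟩ | ⟨q', -, n, rfl⟩
    · exact absurd (mem_singleton_iff.mp hqU ▸ hxL) hq
    · rcases hqU with rfl | ⟨hqL, -⟩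
      · exact ⟨n, subset_rfl⟩
      · exact absurd hqL hq
  | univ => exact ⟨0, subset_univ _⟩
  | inter s t _ _ ihs iht =>
    obtain ⟨m, hm⟩ := ihs hqU.1
    obtain ⟨n, hn⟩ := iht hqU.2
    exact ⟨max m n, subset_inter ((nbhd_antitone q (le_max_left m n)).trans hm)
      ((nbhd_antitone q (le_max_right m n)).trans hn)⟩
  | sUnion S _ ih =>
    obtain ⟨s, hsS, hqs⟩ := hqU
    obtain ⟨n, hn⟩ := ih s hsS hqs
    exact ⟨n, hn.trans (subset_sUnion_of_mem hsS)⟩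

theorem countable_setOf_notMem : {x : ↥(L ∪ ratReals) | (x : ℝ) ∉ L}.Countable := by
  refine ((countable_range ((↑) : ℚ → ℝ)).preimage Subtype.val_injective).mono fun x hx => ?_
  exact x.2.resolve_left hx

theorem isGδ_singleton (x : ↥(L ∪ ratReals)) : @IsGδ _ (luzinTop L) {x} := by
  let _ := luzinTop L
  by_cases hx : (x : ℝ) ∈ L
  · exact (isOpen_singleton_of_mem hx).isGδ
  · rw [← iInter_nbhd x]
    exact .iInter_of_isOpen fun n => isOpen_nbhd hx n

theorem scattered : @Scattered ↥(L ∪ ratReals) (luzinTop L) := by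
  intro S hS
  by_cases hL : ∃ x ∈ S, (x : ℝ) ∈ L
  · obtain ⟨x, hxS, hxL⟩ := hL
    exact ⟨x, hxS, {x}, isOpen_singleton_of_mem hxL,
      inter_eq_left.mpr (singleton_subset_iff.mpr hxS)⟩
  · simp only [not_exists, not_and] at hL
    obtain ⟨x, hxS⟩ := hS
    refine ⟨x, hxS, nbhd L x 0, isOpen_nbhd (hL x hxS) 0, ?_⟩
    refine Subset.antisymm (fun y ⟨hy, hyS⟩ => ?_)
      (singleton_subset_iff.mpr ⟨mem_nbhd_self x 0, hxS⟩)
    rcases hy with rfl | ⟨hyL, -⟩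
    · rfl
    · exact absurd hyL (hL y hyS)

theorem countable_compl_of_superset_of_isOpen
    (hLuzin : ∀ A : Set ℝ, IsNowhereDense A → (L ∩ A).Countable) (hirr : ∀ x ∈ L, Irrational x)
    {U : Set ↥(L ∪ ratReals)} (hU : IsOpen[luzinTop L] U)
    (hQU : {x : ↥(L ∪ ratReals) | (x : ℝ) ∉ L} ⊆ U) :
    Uᶜ.Countable := by
  choose! n hn using fun (q : ↥(L ∪ ratReals)) (hq : (q : ℝ) ∉ L) =>
    exists_nbhd_subset hU (hQU hq) hq
  set V : Set ℝ :=
    ⋃ q ∈ {x : ↥(L ∪ ratReals) | (x : ℝ) ∉ L}, Metric.ball (q : ℝ) (1 / (n q + 1))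
  have hV_open : IsOpen V := isOpen_biUnion fun _ _ => Metric.isOpen_ball
  -- every rational is the centre of one of the balls, since `L` has no rational points
  have hV_dense : Dense V := by
    refine Rat.denseRange_cast.mono (range_subset_iff.mpr fun r => mem_iUnion₂.mpr ?_)
    exact ⟨⟨r, Or.inr ⟨r, rfl⟩⟩, fun h => hirr _ h ⟨r, rfl⟩, Metric.mem_ball_self (by positivity)⟩
  have hV_compl : IsNowhereDense Vᶜ :=
    (isClosed_isNowhereDense_iff_compl.mpr ⟨by rwa [compl_compl], by rwa [compl_compl]⟩).2
  refine ((hLuzin _ hV_compl).preimage Subtype.val_injective).mono fun x hxU => ?_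
  have hxL : (x : ℝ) ∈ L := not_not.mp fun hx => hxU (hQU hx)
  refine ⟨hxL, fun hxV => hxU ?_⟩
  obtain ⟨q, hq, hxq⟩ := mem_iUnion₂.mp hxV
  exact hn q hq (Or.inr ⟨hxL, by rwa [Metric.mem_ball, Real.dist_eq] at hxq⟩)

theorem lindelofSpace (hLuzin : ∀ A : Set ℝ, IsNowhereDense A → (L ∩ A).Countable)
    (hirr : ∀ x ∈ L, Irrational x) : @LindelofSpace _ (luzinTop L) :=
  @lindelofSpace_of_countable_compl_of_superset _ (luzinTop L) _ countable_setOf_notMem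
    fun _ hU hQU => countable_compl_of_superset_of_isOpen hLuzin hirr hU hQU

end LuzinSpace

/-- for a Luzin set L of irrationals, the space X = L ∪ ℚ is
Lindelöf and scattered, but its Gδ-modification is not Lindelöf. -/
theorem luzin_space (L : Set ℝ) (h1 : ¬ L.Countable)
    (h2 : ∀ A : Set ℝ, IsNowhereDense A → (L ∩ A).Countable)
    (h3 : ∀ x ∈ L, Irrational x) :
    @LindelofSpace ↥(L ∪ ratReals) (luzinTop L) ∧
    @Scattered ↥(L ∪ ratReals) (luzinTop L) ∧
    ¬ @LindelofSpace ↥(L ∪ ratReals) (@gdeltaTop ↥(L ∪ ratReals) (luzinTop L)) := by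
  refine ⟨LuzinSpace.lindelofSpace h2 h3, LuzinSpace.scattered, fun hlin => h1 ?_⟩
  have : Countable ↥(L ∪ ratReals) :=
    @countable_of_lindelofSpace_gdeltaTop _ (luzinTop L) LuzinSpace.isGδ_singleton hlin
  exact (countable_range (Subtype.val : ↥(L ∪ ratReals) → ℝ)).mono fun x hx =>
    mem_range.mpr ⟨⟨x, Or.inl hx⟩, rfl⟩
end

section
/- If X is a topological space in which every compact subset is a Gδ set and X is an Alster space, then X is σ-compact. -/
open Set TopologicalSpace

universe u

theorem isAlsterCover_setOf_isCompact {X : Type u} [TopologicalSpace X]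
    (hGd : ∀ K : Set X, IsCompact K → IsGδ K) : IsAlsterCover {K : Set X | IsCompact K} :=
  ⟨hGd, sUnion_eq_univ_iff.2 fun x => ⟨{x}, isCompact_singleton, rfl⟩,
    fun K hK => ⟨K, hK, subset_rfl⟩⟩

theorem AlsterSpace.sigmaCompactSpace {X : Type u} [TopologicalSpace X] (hA : AlsterSpace X)
    (hGd : ∀ K : Set X, IsCompact K → IsGδ K) : SigmaCompactSpace X := by
  obtain ⟨𝒱, h𝒱, h𝒱_countable, h𝒱_cover⟩ := hA _ (isAlsterCover_setOf_isCompact hGd)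
  exact SigmaCompactSpace.of_countable 𝒱 h𝒱_countable h𝒱 h𝒱_cover

/-- if every compact subset of X is Gδ and X is Alster, then X is σ-compact. -/
theorem alster_sigmaCompact (X : Type u) [TopologicalSpace X]
    (hGd : ∀ K : Set X, IsCompact K → IsGδ K) (hA : AlsterSpace X) :
    ∃ K : ℕ → Set X, (∀ n, IsCompact (K n)) ∧ (⋃ n, K n) = univ := by
  have := hA.sigmaCompactSpace hGd
  exact ⟨compactCovering X, isCompact_compactCovering X, iUnion_compactCovering X⟩
end
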